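/- arXiv:1111.4260 — 2 statements merged into one kernel-verified Lean document; each statement's English description precedes it below -/
import Mathlib

section
/- For every real number x and every nonzero complex number t, the two-sided series ∑_{ℓ∈ℤ} J_ℓ(x) t^ℓ converges absolutely and its sum equals exp((x/2)(t − 1/t)). -/
open scoped Real

/-- Bessel function of the first kind of nonnegative integer order, via its power series. -/
noncomputable def besselJnat (ℓ : ℕ) (x : ℝ) : ℝ :=
  ∑' k : ℕ, ((-1 : ℝ) ^ k / ((k.factorial : ℝ) * ((k + ℓ).factorial : ℝ))) * (x / 2) ^ (2 * k + ℓ)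

/-- Bessel function of the first kind of arbitrary integer order: `J_{-ℓ} = (-1)^ℓ J_ℓ`. -/
noncomputable def besselJ (ℓ : ℤ) (x : ℝ) : ℝ :=
  if 0 ≤ ℓ then besselJnat ℓ.toNat x else (-1 : ℝ) ^ ℓ * besselJnat (-ℓ).toNat x

/-- Reindexing equivalence `(ℓ, k) ↦ (k + ℓ⁺, k + ℓ⁻)`. -/
def besselE : ℤ × ℕ ≃ ℕ × ℕ where
  toFun p := (p.2 + p.1.toNat, p.2 + (-p.1).toNat)
  invFun q := ((q.1 : ℤ) - (q.2 : ℤ), min q.1 q.2)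
  left_inv p := by
    obtain ⟨l, k⟩ := p
    simp only [Prod.mk.injEq]
    constructor
    · push_cast; omega
    · omega
  right_inv q := by
    obtain ⟨m, n⟩ := q
    simp only [Prod.mk.injEq]
    constructor <;> omega

/-- The unified term of the Bessel series. -/
noncomputable def besselTerm (x : ℝ) (ℓ : ℤ) (k : ℕ) : ℝ :=
  (-1 : ℝ) ^ (k + (-ℓ).toNat) * (x / 2) ^ (2 * k + ℓ.natAbs) /
    (((k + ℓ.toNat).factorial : ℝ) * ((k + (-ℓ).toNat).factorial : ℝ))

lemma besselJ_eq_tsum_besselTerm (x : ℝ) (ℓ : ℤ) :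
    besselJ ℓ x = ∑' k : ℕ, besselTerm x ℓ k := by
  rcases le_or_gt 0 ℓ with h | h
  · have h0 : (-ℓ).toNat = 0 := by omega
    have h1 : ℓ.natAbs = ℓ.toNat := by omega
    rw [besselJ, if_pos h]
    unfold besselJnat
    refine tsum_congr fun k => ?_
    rw [besselTerm, h0, h1]
    simp only [add_zero]
    ring
  · have h0 : ℓ.toNat = 0 := by omega
    have h1 : ℓ.natAbs = (-ℓ).toNat := by omega
    have hneg : ((-1 : ℝ) ^ ℓ) = (-1 : ℝ) ^ ((-ℓ).toNat) := by
      have h2 : ℓ = -(((-ℓ).toNat : ℕ) : ℤ) := by omega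
      conv_lhs => rw [h2]
      rw [zpow_neg, zpow_natCast, ← inv_pow, inv_neg, inv_one]
    rw [besselJ, if_neg (not_le.mpr h), hneg]
    unfold besselJnat
    rw [← tsum_mul_left]
    refine tsum_congr fun k => ?_
    rw [besselTerm, h0, h1]
    simp only [add_zero, pow_add]
    ring

set_option maxHeartbeats 1000000 in
/-- Generating function of the Bessel functions: for every real `x` and nonzero complex `t`,
the two-sided series `∑_{ℓ ∈ ℤ} J_ℓ(x) t^ℓ` converges absolutely and its sum is
`exp((x/2)(t - 1/t))`. -/
theorem besselJ_generating_function (x : ℝ) (t : ℂ) (ht : t ≠ 0) :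
    Summable (fun ℓ : ℤ => ‖(besselJ ℓ x : ℂ) * t ^ ℓ‖) ∧
      ∑' ℓ : ℤ, (besselJ ℓ x : ℂ) * t ^ ℓ = Complex.exp ((x : ℂ) / 2 * (t - 1 / t)) := by
  obtain ⟨a, ha⟩ : ∃ a : ℂ, a = (x : ℂ) / 2 := ⟨_, rfl⟩
  obtain ⟨f, hf⟩ : ∃ f : ℕ × ℕ → ℂ, f = fun p =>
      ((a * t) ^ p.1 / (p.1.factorial : ℂ)) * ((-a / t) ^ p.2 / (p.2.factorial : ℂ)) :=
    ⟨_, rfl⟩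
  -- summability of the two exponential series
  have hs1 : Summable fun m : ℕ => ‖(a * t) ^ m / (m.factorial : ℂ)‖ := by
    simpa [norm_div, norm_pow] using Real.summable_pow_div_factorial ‖a * t‖
  have hs2 : Summable fun n : ℕ => ‖(-a / t) ^ n / (n.factorial : ℂ)‖ := by
    simpa [norm_div, norm_pow] using Real.summable_pow_div_factorial ‖-a / t‖
  have hfs : Summable fun p : ℕ × ℕ => ‖f p‖ := by
    simp only [hf]
    exact Summable.mul_norm (f := fun m : ℕ => (a * t) ^ m / (m.factorial : ℂ))
      (g := fun n : ℕ => (-a / t) ^ n / (n.factorial : ℂ)) hs1 hs2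
  have hg : Summable fun p : ℤ × ℕ => ‖f (besselE p)‖ :=
    ((besselE.summable_iff (f := fun p => ‖f p‖)).mpr hfs)
  have hg' : Summable fun p : ℤ × ℕ => f (besselE p) := hg.of_norm
  -- key termwise identity
  have hkey : ∀ (ℓ : ℤ) (k : ℕ), f (besselE (ℓ, k)) = (besselTerm x ℓ k : ℂ) * t ^ ℓ := by
    intro ℓ k
    set p := ℓ.toNat
    set q := (-ℓ).toNat
    have htℓ : t ^ ℓ = t ^ (k + p) * (t ^ (k + q))⁻¹ := by
      rw [← zpow_natCast t (k + p), ← zpow_natCast t (k + q), ← zpow_neg, ← zpow_add₀ ht]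
      congr 1
      push_cast
      omega
    have hE : besselE (ℓ, k) = (k + p, k + q) := rfl
    have hnat : 2 * k + ℓ.natAbs = (k + p) + (k + q) := by omega
    have hfac1 : ((k + p).factorial : ℂ) ≠ 0 := Nat.cast_ne_zero.mpr (k + p).factorial_ne_zero
    have hfac2 : ((k + q).factorial : ℂ) ≠ 0 := Nat.cast_ne_zero.mpr (k + q).factorial_ne_zero
    rw [hE]
    simp only [hf, besselTerm]
    rw [htℓ]
    push_cast
    rw [← ha, hnat, pow_add]
    have htn : t ^ (k + q) ≠ 0 := pow_ne_zero _ ht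
    rw [show ℓ.toNat = p from rfl, show (-ℓ).toNat = q from rfl]
    field_simp
    have e2 : t⁻¹ ^ k * t ^ k = 1 := by rw [← mul_pow, inv_mul_cancel₀ ht, one_pow]
    have e3 : t⁻¹ ^ q * t ^ q = 1 := by rw [← mul_pow, inv_mul_cancel₀ ht, one_pow]
    linear_combination (a ^ (k * 2) * a ^ p * a ^ q * t ^ p * (-1) ^ k * (-1) ^ q * t ^ k * t ^ q * t⁻¹ ^ q) * e2 + (a ^ (k * 2) * a ^ p * a ^ q * t ^ p * (-1) ^ k * (-1) ^ q * t ^ k) * e3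
  -- each ℓ-fiber sums to the corresponding Bessel coefficient
  have hfiber : ∀ ℓ : ℤ, ∑' k : ℕ, f (besselE (ℓ, k)) = (besselJ ℓ x : ℂ) * t ^ ℓ := by
    intro ℓ
    calc ∑' k : ℕ, f (besselE (ℓ, k)) = ∑' k : ℕ, (besselTerm x ℓ k : ℂ) * t ^ ℓ :=
          tsum_congr fun k => hkey ℓ k
      _ = (∑' k : ℕ, (besselTerm x ℓ k : ℂ)) * t ^ ℓ := tsum_mul_right
      _ = ((besselJ ℓ x : ℝ) : ℂ) * t ^ ℓ := by
          rw [← Complex.ofReal_tsum, ← besselJ_eq_tsum_besselTerm]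
  refine ⟨?_, ?_⟩
  · -- summability of the norms
    have houter : Summable fun ℓ : ℤ => ∑' k : ℕ, ‖f (besselE (ℓ, k))‖ := by
      refine (hg.hasSum.prod_fiberwise fun ℓ => ?_).summable
      exact (hg.prod_factor ℓ).hasSum
    refine Summable.of_nonneg_of_le (fun ℓ => norm_nonneg _) (fun ℓ => ?_) houter
    rw [← hfiber ℓ]
    exact norm_tsum_le_tsum_norm (hg.prod_factor ℓ)
  · -- value of the sum
    have h1 : ∑' ℓ : ℤ, (besselJ ℓ x : ℂ) * t ^ ℓ = ∑' p : ℤ × ℕ, f (besselE p) := by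
      rw [Summable.tsum_prod' hg' fun ℓ => (hg.prod_factor ℓ).of_norm]
      exact tsum_congr fun ℓ => (hfiber ℓ).symm
    have h2 : ∑' p : ℤ × ℕ, f (besselE p) = ∑' p : ℕ × ℕ, f p := besselE.tsum_eq f
    have h3 : ∑' p : ℕ × ℕ, f p =
        (∑' m : ℕ, (a * t) ^ m / (m.factorial : ℂ)) *
          ∑' n : ℕ, (-a / t) ^ n / (n.factorial : ℂ) := by
      simp only [hf]
      exact tsum_mul_tsum_of_summable_norm (f := fun m : ℕ => (a * t) ^ m / (m.factorial : ℂ))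
        (g := fun n : ℕ => (-a / t) ^ n / (n.factorial : ℂ)) hs1 hs2 |>.symm
    have hexp : ∀ z : ℂ, Complex.exp z = ∑' n : ℕ, z ^ n / (n.factorial : ℂ) := by
      intro z
      rw [Complex.exp_eq_exp_ℂ, NormedSpace.exp_eq_tsum_div]
    rw [h1, h2, h3, ← hexp, ← hexp, ← Complex.exp_add]
    rw [ha]
    congr 1
    field_simp
    ring
end

section
/- Let M ≥ 0 and L ≥ 2M + 2 be integers. Let a : ℤ → ℂ be absolutely summable with a_k = 0 whenever L does not divide k, and let u : ℤ → ℂ be bounded with u_n = 0 whenever there exists j ∈ ℤ with |n − jL| ≤ M. Then for every integer m such that |m − jL| ≤ M for some j ∈ ℤ, the convolution satisfies (a ⋆ u)_m = ∑_{k∈ℤ} a_k u_{m−k} = 0. -/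
/-- Convolution invariance lemma: if the Fourier coefficients `a_k` vanish unless `L ∣ k`
and `u_n` vanishes for all `n` within distance `M` of the lattice `Lℤ`, then the
convolution `(a ⋆ u)_m = ∑_k a_k u_{m−k}` also vanishes for all such `m`. -/
theorem convolution_invariance (M L : ℤ) (hM : 0 ≤ M) (hL : 2 * M + 2 ≤ L)
    (a : ℤ → ℂ) (ha : Summable (fun k : ℤ => ‖a k‖))
    (haL : ∀ k : ℤ, ¬ L ∣ k → a k = 0)
    (u : ℤ → ℂ) (C : ℝ) (hu : ∀ n : ℤ, ‖u n‖ ≤ C)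
    (huV : ∀ n : ℤ, (∃ j : ℤ, |n - j * L| ≤ M) → u n = 0) :
    ∀ m : ℤ, (∃ j : ℤ, |m - j * L| ≤ M) → ∑' k : ℤ, a k * u (m - k) = 0 := by
  intro m ⟨j, hj⟩
  have : ∀ k : ℤ, a k * u (m - k) = 0 := by
    intro k
    by_cases h : L ∣ k
    · obtain ⟨t, rfl⟩ := h
      have : u (m - L * t) = 0 := by
        refine huV _ ⟨j - t, ?_⟩
        have : m - L * t - (j - t) * L = m - j * L := by ring
        rw [this]; exact hj
      rw [this, mul_zero]
    · rw [haL k h, zero_mul]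
  simp [this]
end
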